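/- arXiv:2212.02972 — 2 statements merged into one kernel-verified Lean document; each statement's English description precedes it below -/
import Mathlib

section
/- Let n ≥ 0 be an integer, with h, δ, ν_n and β as defined. For every f ∈ K_∞⟨t⟩ one has β(f·ν_n) = (f − (−θ)^δ f^{(1)})·ν_n. Consequently, β maps the 𝔽[t]-submodule 𝔪_∞⟨t⟩·ν_n into itself and restricts to a bijection of 𝔪_∞⟨t⟩·ν_n onto itself. -/
open scoped Classical ENNReal
open Filter

noncomputable section

namespace Carlitz

variable (F : Type) [Field F] [Fintype F]

/-- `K∞ = 𝔽((1/θ))`, realized as the field of formal Laurent series over `F`;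
the Laurent-series variable plays the role of `1/θ`. -/
abbrev Kinf := LaurentSeries F

/-- `θ ∈ K∞`, the inverse of the Laurent-series variable. -/
def theta : Kinf F := HahnSeries.single (-1 : ℤ) (1 : F)

/-- The absolute value `|x| = q ^ (deg_θ x)`, with values in `ℝ≥0∞`. -/
def Kabs {R : Type} [Zero R] (q : ℕ) (x : HahnSeries ℤ R) : ℝ≥0∞ :=
  if x = 0 then 0 else (q : ℝ≥0∞) ^ (-x.order)

/-- The ambient ring of the Tate algebra: formal power series in `t` over `K∞`. -/
abbrev TS := PowerSeries (Kinf F)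

/-- The `i`-th `t`-coefficient. -/
def coeffT (i : ℕ) (f : TS F) : Kinf F := PowerSeries.coeff (R := Kinf F) i f

/-- Membership in the Tate algebra `K∞⟨t⟩`: the coefficients tend to `0`. -/
def IsTate (f : TS F) : Prop :=
  Tendsto (fun i => Kabs (Fintype.card F) (coeffT F i f)) atTop (nhds 0)

/-- The Gauss norm `‖f‖ = sup_i |a_i|`. -/
def gnorm (f : TS F) : ℝ≥0∞ := ⨆ i, Kabs (Fintype.card F) (coeffT F i f)

/-- The twist `f ↦ f⁽¹⁾`: the coefficientwise `q`-power Frobenius. -/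
def twist (f : TS F) : TS F := PowerSeries.mk fun i => coeffT F i f ^ Fintype.card F

/-- The iterated twist `f ↦ f⁽ᵏ⁾`. -/
def twistIter (k : ℕ) (f : TS F) : TS F := (twist F)^[k] f

/-- The variable `t` of the Tate algebra. -/
def tt : TS F := PowerSeries.X

/-- `θ`, viewed as a constant of `K∞⟨t⟩`. -/
def th : TS F := PowerSeries.C (R := Kinf F) (theta F)

/-- The embedding `𝔽[θ] → K∞` sending the polynomial variable to `θ`. -/
def polyK : Polynomial F →+* Kinf F :=
  Polynomial.eval₂RingHom (HahnSeries.C : F →+* Kinf F) (theta F)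

/-- The embedding `𝔽[θ][t] → K∞⟨t⟩`: the outer variable goes to `t`,
the inner variable goes to `θ`. -/
def polyT : Polynomial (Polynomial F) →+* TS F :=
  Polynomial.eval₂RingHom ((PowerSeries.C (R := Kinf F)).comp (polyK F)) PowerSeries.X

/-- The subring `𝔽[θ,t] ⊆ K∞⟨t⟩`. -/
def PolyTT : Set (TS F) := Set.range (polyT F)

/-- The subset of `𝔽[θ,t]` of elements of `θ`-degree `< n`. -/
def PolyDegLt (n : ℕ) : Set (TS F) :=
  {f | ∃ P : Polynomial (Polynomial F), (∀ i, (P.coeff i).degree < (n : ℕ)) ∧ f = polyT F P}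

/-- The action of `𝔽[t]` on `K∞⟨t⟩`: `a • f` is `actT a * f`. -/
def actT : Polynomial F →+* TS F :=
  Polynomial.eval₂RingHom ((PowerSeries.C (R := Kinf F)).comp (HahnSeries.C : F →+* Kinf F))
    PowerSeries.X

/-- Convergence in `K∞⟨t⟩` with respect to the Gauss norm:
`L` is the limit of the sequence `s`. -/
def TT (s : ℕ → TS F) (L : TS F) : Prop :=
  Tendsto (fun N => gnorm F (L - s N)) atTop (nhds 0)

/-- Convergence in `K∞`: `L` is the limit of the sequence `s`. -/
def KT (q : ℕ) (s : ℕ → Kinf F) (L : Kinf F) : Prop :=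
  Tendsto (fun N => Kabs q (L - s N)) atTop (nhds 0)

/-- Partial products defining `ν_n = (−θ)^{−h} ∏_{j≥0} (1 − t·θ^{−qʲ})ⁿ`,
where `n = h(q−1) + δ`. -/
def nuPartial (n h N : ℕ) : TS F :=
  PowerSeries.C (R := Kinf F) ((-theta F)⁻¹ ^ h) *
    ∏ j ∈ Finset.range N,
      (1 - tt F * PowerSeries.C (R := Kinf F) ((theta F)⁻¹ ^ Fintype.card F ^ j)) ^ n

/-- Partial products defining `ω_n = (−θ)^m ∏_{i≥0} (1 − t·θ^{−qⁱ})^{−n}`,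
where `n = m(q−1)`; `ω_n` is the `n`-th power of the Anderson–Thakur function. -/
def omegaPartial (n m N : ℕ) : TS F :=
  PowerSeries.C (R := Kinf F) ((-theta F) ^ m) *
    ∏ i ∈ Finset.range N,
      ((1 - tt F * PowerSeries.C (R := Kinf F) ((theta F)⁻¹ ^ Fintype.card F ^ i)) ^ n)⁻¹

/-- Partial sums defining `ξ_e = ∑_{k≥0} e⁽ᵏ⁾ ∏_{i=0}^{k} (t−θ^{qⁱ})^{−n}`. -/
def xiPartial (n : ℕ) (e : TS F) (N : ℕ) : TS F :=
  ∑ k ∈ Finset.range N, twistIter F k e *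
    (∏ i ∈ Finset.range (k + 1),
      (tt F - PowerSeries.C (R := Kinf F) (theta F ^ Fintype.card F ^ i)) ^ n)⁻¹

/-- Partial sums defining `s_h = h + ∑_{i≥1} h⁽ⁱ⁾ ∏_{j=0}^{i−1} (t−θ^{qʲ})^{−n}`. -/
def sPartial (n : ℕ) (h : TS F) (N : ℕ) : TS F :=
  ∑ i ∈ Finset.range N, twistIter F i h *
    (∏ j ∈ Finset.range i,
      (tt F - PowerSeries.C (R := Kinf F) (theta F ^ Fintype.card F ^ j)) ^ n)⁻¹

/-- The map `β : f ↦ f − (t−θ)ⁿ f⁽¹⁾`. -/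
def beta (n : ℕ) (f : TS F) : TS F := f - (tt F - th F) ^ n * twist F f

/-- The set of integral extension representatives
`X_n = {ξ ∈ K∞⟨t⟩ : (t−θ)ⁿ ξ − ξ⁽¹⁾ ∈ 𝔽[θ,t]}`. -/
def Xset (n : ℕ) : Set (TS F) :=
  {ξ | IsTate F ξ ∧ (tt F - th F) ^ n * ξ - twist F ξ ∈ PolyTT F}


end Carlitz

/-!
Twisting the partial product `∏_{j<N} (1 - t θ^{-q^j})ⁿ` shifts every factor to `j + 1`, and
`(t - θ)ⁿ = (-θ)ⁿ (1 - t θ⁻¹)ⁿ` restores the factor `j = 0`; with the normalisation `(-θ)^{-h}` and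
`n = h(q-1) + δ` this gives `(t - θ)ⁿ ν_N⁽¹⁾ = (-θ)^δ ν_{N+1}`, hence `(t - θ)ⁿ ν⁽¹⁾ = (-θ)^δ ν` in
the limit, which is the twisting formula.

On `𝔪_∞⟨t⟩` the map `g ↦ g - (-θ)^δ g⁽¹⁾` acts on each `t`-coefficient as `x ↦ x - c x^q` with
`|c| = q^δ ≤ q^(q-2)`. For fixed `a` with `|a| < 1`, `y ↦ a + c y^q` raises the `1/θ`-adic order of
differences of order `≥ 1` by at least one, since `(y - z)^q = y^q - z^q`. Its iterates from `0`
converge coefficientwise to its unique fixed point in the open unit ball, which is the unique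
preimage of `a` there and satisfies `|x| ≤ |a|`, so preimages of Tate series are Tate series.
-/

namespace HahnSeries

variable {R : Type*} [AddGroup R] {x y : HahnSeries ℤ R} {a : WithTop ℤ}

theorem le_orderTop_add (hx : a ≤ x.orderTop) (hy : a ≤ y.orderTop) : a ≤ (x + y).orderTop :=
  (le_min hx hy).trans min_orderTop_le_orderTop_add

theorem le_orderTop_sub (hx : a ≤ x.orderTop) (hy : a ≤ y.orderTop) : a ≤ (x - y).orderTop :=
  (le_min hx hy).trans min_orderTop_le_orderTop_sub

theorem eq_zero_of_forall_coe_add_le_orderTop (e : ℤ)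
    (h : ∀ k : ℕ, ((e + k : ℤ) : WithTop ℤ) ≤ x.orderTop) : x = 0 := by
  refine HahnSeries.ext (funext fun m => coeff_eq_zero_of_lt_orderTop ?_)
  refine lt_of_lt_of_le ?_ (h (m - e + 1).toNat)
  exact WithTop.coe_lt_coe.2 (by omega)

theorem exists_forall_coe_add_le_orderTop_sub (s : ℕ → HahnSeries ℤ R) (e : ℤ)
    (h0 : (e : WithTop ℤ) ≤ (s 0).orderTop)
    (hs : ∀ k : ℕ, ((e + k : ℤ) : WithTop ℤ) ≤ (s (k + 1) - s k).orderTop) :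
    ∃ x : HahnSeries ℤ R, ∀ k : ℕ, ((e + k : ℤ) : WithTop ℤ) ≤ (x - s k).orderTop := by
  have hcauchy : ∀ k d : ℕ, ((e + k : ℤ) : WithTop ℤ) ≤ (s (k + d) - s k).orderTop := by
    intro k d
    induction d with
    | zero => simp
    | succ d ih =>
      rw [← add_assoc, ← sub_add_sub_cancel _ (s (k + d))]
      exact le_orderTop_add ((WithTop.coe_le_coe.2 (by omega)).trans (hs _)) ih
  have hcoeff : ∀ k l : ℕ, ∀ m : ℤ, m < e + k → m < e + l → (s k).coeff m = (s l).coeff m := by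
    intro k l m hk hl
    wlog hkl : k ≤ l generalizing k l
    · exact (this l k hl hk (by omega)).symm
    obtain ⟨d, rfl⟩ := Nat.exists_eq_add_of_le hkl
    have := coeff_eq_zero_of_lt_orderTop ((WithTop.coe_lt_coe.2 hk).trans_le (hcauchy k d))
    rw [coeff_sub, sub_eq_zero] at this
    exact this.symm
  have hidx : ∀ m : ℤ, m < e + ((m - e + 1).toNat : ℕ) := fun m => by omega
  have hsupp : ∀ m : ℤ, m < e → (s (m - e + 1).toNat).coeff m = 0 := fun m hm => by
    rw [hcoeff _ 0 m (hidx m) (by omega)]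
    exact coeff_eq_zero_of_lt_orderTop ((WithTop.coe_lt_coe.2 hm).trans_le h0)
  have hbdd : BddBelow (Function.support fun m => (s (m - e + 1).toNat).coeff m) :=
    ⟨e, fun m hm => not_lt.1 fun hlt => hm (hsupp m hlt)⟩
  refine ⟨ofSuppBddBelow _ hbdd, fun k => ?_⟩
  refine le_orderTop_iff_forall.2 fun m hm => ?_
  rw [coeff_sub, coeff_ofSuppBddBelow, hcoeff _ k m (hidx m) (WithTop.coe_lt_coe.1 hm), sub_self]

theorem coe_add_le_orderTop_mul {R : Type*} [Ring R] {x y : HahnSeries ℤ R} {e e' : ℤ}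
    (hx : (e : WithTop ℤ) ≤ x.orderTop) (hy : (e' : WithTop ℤ) ≤ y.orderTop) :
    ((e + e' : ℤ) : WithTop ℤ) ≤ (x * y).orderTop :=
  (add_le_add hx hy).trans orderTop_add_le_mul

theorem coe_mul_le_orderTop_pow {R : Type*} [Ring R] {x : HahnSeries ℤ R} {e : ℤ}
    (hx : (e : WithTop ℤ) ≤ x.orderTop) (n : ℕ) :
    ((n * e : ℤ) : WithTop ℤ) ≤ (x ^ n).orderTop := by
  rw [← nsmul_eq_mul, WithTop.coe_nsmul]
  exact (nsmul_le_nsmul_right hx n).trans orderTop_nsmul_le_orderTop_pow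

variable {T : HahnSeries ℤ R → HahnSeries ℤ R} {e : ℤ}

theorem exists_isFixedPt_of_contracting (h0 : (e : WithTop ℤ) ≤ (T 0).orderTop)
    (hcontr : ∀ y z, ∀ m : ℤ, e ≤ m → (m : WithTop ℤ) ≤ (y - z).orderTop →
      ((m + 1 : ℤ) : WithTop ℤ) ≤ (T y - T z).orderTop) :
    ∃ x, (e : WithTop ℤ) ≤ x.orderTop ∧ Function.IsFixedPt T x := by
  set s : ℕ → HahnSeries ℤ R := fun k => T^[k] 0 with hs
  have hs_succ : ∀ k, s (k + 1) = T (s k) := fun k => Function.iterate_succ_apply' T k 0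
  have hs_step : ∀ k : ℕ, ((e + k : ℤ) : WithTop ℤ) ≤ (s (k + 1) - s k).orderTop := by
    intro k
    induction k with
    | zero => simpa [hs] using h0
    | succ k ih =>
      have := hcontr _ _ (e + k) (by omega) ih
      rw [← hs_succ, ← hs_succ] at this
      simpa [add_assoc] using this
  obtain ⟨x, hx⟩ := exists_forall_coe_add_le_orderTop_sub s e (by simp [hs]) hs_step
  refine ⟨x, by simpa [hs] using hx 0,
    sub_eq_zero.1 (eq_zero_of_forall_coe_add_le_orderTop e fun k => ?_)⟩
  have hT_near := hcontr _ _ (e + k) (by omega) (hx k)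
  rw [← sub_add_sub_cancel _ (s (k + 1)), hs_succ, ← neg_sub x]
  refine le_orderTop_add ((WithTop.coe_le_coe.2 (by omega)).trans hT_near) ?_
  rw [orderTop_neg, ← hs_succ]
  exact (WithTop.coe_le_coe.2 (by omega)).trans (hx (k + 1))

theorem eq_of_isFixedPt_of_contracting
    (hcontr : ∀ y z, ∀ m : ℤ, e ≤ m → (m : WithTop ℤ) ≤ (y - z).orderTop →
      ((m + 1 : ℤ) : WithTop ℤ) ≤ (T y - T z).orderTop)
    (hx : (e : WithTop ℤ) ≤ x.orderTop) (hy : (e : WithTop ℤ) ≤ y.orderTop)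
    (hTx : Function.IsFixedPt T x) (hTy : Function.IsFixedPt T y) : x = y := by
  refine sub_eq_zero.1 (eq_zero_of_forall_coe_add_le_orderTop e fun k => ?_)
  induction k with
  | zero => simpa using le_orderTop_sub hx hy
  | succ k ih =>
    have := hcontr x y (e + k) (by omega) ih
    rw [hTx.eq, hTy.eq] at this
    simpa [add_assoc] using this

end HahnSeries

namespace Carlitz

variable {F : Type} [Field F]

section Kabs

variable {q : ℕ}

theorem natCast_zpow_le_natCast_zpow_iff (hq : 1 < q) {a b : ℤ} :
    (q : ℝ≥0∞) ^ a ≤ (q : ℝ≥0∞) ^ b ↔ a ≤ b := by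
  have hq0 : (q : NNReal) ≠ 0 := by positivity
  rw [← ENNReal.coe_natCast, ← ENNReal.coe_zpow hq0, ← ENNReal.coe_zpow hq0, ENNReal.coe_le_coe,
    zpow_le_zpow_iff_right₀ (by exact_mod_cast hq)]

theorem Kabs_le_zpow_iff {R : Type} [Zero R] (hq : 1 < q) {e : ℤ} {x : HahnSeries ℤ R} :
    Kabs q x ≤ (q : ℝ≥0∞) ^ (-e) ↔ (e : WithTop ℤ) ≤ x.orderTop := by
  rcases eq_or_ne x 0 with rfl | hx
  · simp [Kabs]
  · rw [Kabs, if_neg hx, ← HahnSeries.order_eq_orderTop_of_ne_zero hx, WithTop.coe_le_coe,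
      natCast_zpow_le_natCast_zpow_iff hq, neg_le_neg_iff]

theorem Kabs_lt_one_iff {R : Type} [Zero R] (hq : 1 < q) {x : HahnSeries ℤ R} :
    Kabs q x < 1 ↔ (1 : WithTop ℤ) ≤ x.orderTop := by
  rcases eq_or_ne x 0 with rfl | hx
  · simp [Kabs]
  · rw [Kabs, if_neg hx, ← HahnSeries.order_eq_orderTop_of_ne_zero hx, ← zpow_zero (q : ℝ≥0∞),
      ← WithTop.coe_one, WithTop.coe_le_coe, ← not_le, natCast_zpow_le_natCast_zpow_iff hq]
    omega

theorem tendsto_nhds_zero_iff_eventually_le_zpow (hq : 1 < q) {ι : Type*} {l : Filter ι}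
    {u : ι → ℝ≥0∞} :
    Tendsto u l (nhds 0) ↔ ∀ m : ℤ, ∀ᶠ i in l, u i ≤ (q : ℝ≥0∞) ^ (-m) := by
  rw [ENNReal.tendsto_nhds_zero]
  refine ⟨fun h m => h _ (ENNReal.zpow_pos (by positivity) (by simp) _), fun h ε hε => ?_⟩
  obtain ⟨n, hn⟩ := ENNReal.exists_inv_nat_lt hε.ne'
  refine (h n).mono fun i hi => hi.trans (le_trans ?_ hn.le)
  rw [ENNReal.zpow_neg, zpow_natCast]
  exact ENNReal.inv_le_inv.2 (by exact_mod_cast (Nat.lt_pow_self hq).le)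

end Kabs

/-- `OrderGE e f` encodes `‖f‖ ≤ q^(-e)`. -/
def OrderGE (e : ℤ) (f : TS F) : Prop := ∀ i, (e : WithTop ℤ) ≤ (coeffT F i f).orderTop

theorem coeffT_sub (i : ℕ) (f g : TS F) : coeffT F i (f - g) = coeffT F i f - coeffT F i g :=
  map_sub _ f g

theorem coeffT_C_mul (i : ℕ) (a : Kinf F) (f : TS F) :
    coeffT F i (PowerSeries.C a * f) = a * coeffT F i f :=
  PowerSeries.coeff_C_mul i f a

namespace OrderGE

variable {e e' : ℤ} {f g : TS F}

theorem mono (hf : OrderGE e f) (h : e' ≤ e) : OrderGE e' f :=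
  fun i => (WithTop.coe_le_coe.2 h).trans (hf i)

theorem sub (hf : OrderGE e f) (hg : OrderGE e g) : OrderGE e (f - g) := fun i => by
  rw [coeffT_sub]
  exact HahnSeries.le_orderTop_sub (hf i) (hg i)

theorem mul (hf : OrderGE e f) (hg : OrderGE e' g) : OrderGE (e + e') (f * g) := fun i => by
  rw [coeffT, PowerSeries.coeff_mul, ← HahnSeries.addVal_apply]
  refine (HahnSeries.addVal ℤ F).map_le_sum fun p _ => ?_
  rw [HahnSeries.addVal_apply]
  exact HahnSeries.coe_add_le_orderTop_mul (hf p.1) (hg p.2)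

theorem pow (hf : OrderGE e f) (n : ℕ) : OrderGE (n * e) (f ^ n) := by
  induction n with
  | zero =>
    intro i
    rw [pow_zero, coeffT, PowerSeries.coeff_one]
    split_ifs <;> simp
  | succ n ih => simpa [pow_succ, add_mul] using ih.mul hf

end OrderGE

theorem orderGE_C {e : ℤ} {a : Kinf F} (ha : (e : WithTop ℤ) ≤ a.orderTop) :
    OrderGE e (PowerSeries.C a) := fun i => by
  rw [coeffT, PowerSeries.coeff_C]
  split_ifs <;> simp [ha]

theorem eq_zero_of_forall_orderGE {f : TS F} (h : ∀ m : ℤ, OrderGE m f) : f = 0 :=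
  PowerSeries.ext fun i =>
    HahnSeries.eq_zero_of_forall_coe_add_le_orderTop 0 fun _ => h _ i

theorem theta_ne_zero : theta F ≠ 0 := HahnSeries.single_ne_zero one_ne_zero

theorem coe_neg_le_orderTop_neg_theta_pow (δ : ℕ) :
    ((-δ : ℤ) : WithTop ℤ) ≤ ((-theta F) ^ δ).orderTop := by
  have h := HahnSeries.orderTop_single (Γ := ℤ) (a := -1) (one_ne_zero (α := F))
  have := HahnSeries.coe_mul_le_orderTop_pow (x := -theta F) (e := -1)
    (by rw [HahnSeries.orderTop_neg, theta, h]) δ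
  simpa using this

theorem orderGE_tt_sub_th_pow (n : ℕ) : OrderGE (-n) ((tt F - th F) ^ n) := by
  have htt : OrderGE (-1) (tt F) := fun i => by
    rw [coeffT, tt, PowerSeries.coeff_X]
    split_ifs <;> simp [(by decide : (-1 : WithTop ℤ) ≤ 0)]
  have hth : OrderGE (-1) (th F) :=
    orderGE_C (by rw [theta, HahnSeries.orderTop_single one_ne_zero])
  simpa using (htt.sub hth).pow n

variable [Fintype F]

theorem sub_pow_card (x y : Kinf F) :
    (x - y) ^ Fintype.card F = x ^ Fintype.card F - y ^ Fintype.card F :=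
  map_sub (FiniteField.frobeniusAlgHom F (Kinf F)) x y

theorem twist_eq_map (f : TS F) :
    twist F f = PowerSeries.map (FiniteField.frobeniusAlgHom F (Kinf F) : Kinf F →+* Kinf F) f :=
  PowerSeries.ext fun i => by simp [twist, coeffT]

theorem twist_mul (f g : TS F) : twist F (f * g) = twist F f * twist F g := by
  simp only [twist_eq_map, map_mul]

theorem twist_sub (f g : TS F) : twist F (f - g) = twist F f - twist F g := by
  simp only [twist_eq_map, map_sub]

theorem twist_C (a : Kinf F) :
    twist F (PowerSeries.C a) = PowerSeries.C (a ^ Fintype.card F) := by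
  simp [twist_eq_map]

theorem coeffT_twist (i : ℕ) (f : TS F) :
    coeffT F i (twist F f) = coeffT F i f ^ Fintype.card F :=
  PowerSeries.coeff_mk _ _

theorem OrderGE.twist {e : ℤ} {f : TS F} (hf : OrderGE e f) :
    OrderGE (Fintype.card F * e) (twist F f) := fun i => by
  rw [coeffT_twist]
  exact HahnSeries.coe_mul_le_orderTop_pow (hf i) _

theorem gnorm_le_zpow_iff {e : ℤ} {f : TS F} :
    gnorm F f ≤ (Fintype.card F : ℝ≥0∞) ^ (-e) ↔ OrderGE e f := by
  rw [gnorm, iSup_le_iff]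
  exact forall_congr' fun i => Kabs_le_zpow_iff (Fintype.one_lt_card (α := F))

theorem gnorm_lt_one_iff {f : TS F} : gnorm F f < 1 ↔ OrderGE 1 f := by
  refine ⟨fun h i => (Kabs_lt_one_iff (Fintype.one_lt_card (α := F))).1 ((le_iSup _ i).trans_lt h),
    fun h => (gnorm_le_zpow_iff.2 h).trans_lt ?_⟩
  rw [← zpow_zero (Fintype.card F : ℝ≥0∞), ← not_le,
    natCast_zpow_le_natCast_zpow_iff (Fintype.one_lt_card (α := F))]
  omega

theorem isTate_iff {f : TS F} :
    IsTate F f ↔ ∀ m : ℤ, ∀ᶠ i in atTop, (m : WithTop ℤ) ≤ (coeffT F i f).orderTop := by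
  rw [IsTate, tendsto_nhds_zero_iff_eventually_le_zpow (Fintype.one_lt_card (α := F))]
  simp only [Kabs_le_zpow_iff (Fintype.one_lt_card (α := F))]

theorem TT_iff {s : ℕ → TS F} {L : TS F} :
    TT F s L ↔ ∀ m : ℤ, ∀ᶠ N in atTop, OrderGE m (L - s N) := by
  rw [TT, tendsto_nhds_zero_iff_eventually_le_zpow (Fintype.one_lt_card (α := F))]
  simp only [gnorm_le_zpow_iff]

section Limits

variable {s : ℕ → TS F} {L L' : TS F}

theorem TT.unique (h : TT F s L) (h' : TT F s L') : L = L' := by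
  refine sub_eq_zero.1 (eq_zero_of_forall_orderGE fun m => ?_)
  obtain ⟨N, hN, hN'⟩ := ((TT_iff.1 h m).and (TT_iff.1 h' m)).exists
  simpa using hN.sub hN'

theorem TT.mul_left {a : TS F} {e : ℤ} (ha : OrderGE e a) (h : TT F s L) :
    TT F (fun N => a * s N) (a * L) :=
  TT_iff.2 fun m => (TT_iff.1 h (m - e)).mono fun N hN => by
    simpa [← mul_sub] using ha.mul hN

theorem TT.twist (h : TT F s L) : TT F (fun N => twist F (s N)) (twist F L) :=
  TT_iff.2 fun m => (TT_iff.1 h (max m 0)).mono fun N hN => by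
    rw [← twist_sub]
    refine hN.twist.mono ?_
    nlinarith [le_max_left m 0, le_max_right m 0, (Fintype.one_lt_card (α := F))]

end Limits

def nuFactor (j : ℕ) : TS F :=
  1 - tt F * PowerSeries.C ((theta F)⁻¹ ^ Fintype.card F ^ j)

theorem twist_nuFactor (j : ℕ) : twist F (nuFactor j) = nuFactor (F := F) (j + 1) := by
  simp [nuFactor, twist_eq_map, tt, ← pow_mul, pow_succ]

theorem twist_prod_nuFactor_pow (n N : ℕ) :
    twist F (∏ j ∈ Finset.range N, nuFactor j ^ n)
      = ∏ j ∈ Finset.range N, nuFactor (j + 1) ^ n := by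
  rw [twist_eq_map, map_prod]
  simp only [map_pow, ← twist_eq_map, twist_nuFactor]

theorem tt_sub_th : tt F - th F = PowerSeries.C (-theta F) * nuFactor 0 := by
  rw [nuFactor, pow_zero, pow_one, mul_sub, mul_one, mul_left_comm, ← map_mul, neg_mul,
    mul_inv_cancel₀ theta_ne_zero]
  simp only [th, map_neg, map_one]
  ring

theorem tt_sub_th_pow_mul_twist_nuPartial {n h δ : ℕ} (hdiv : n = h * (Fintype.card F - 1) + δ)
    (N : ℕ) :
    (tt F - th F) ^ n * twist F (nuPartial F n h N)
      = PowerSeries.C ((-theta F) ^ δ) * nuPartial F n h (N + 1) := by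
  have hscal : (-theta F) ^ n * ((-theta F)⁻¹ ^ h) ^ Fintype.card F
      = (-theta F) ^ δ * (-theta F)⁻¹ ^ h := by
    have hx : -theta F ≠ 0 := neg_ne_zero.2 theta_ne_zero
    have hexp : n + h = δ + h * Fintype.card F := by
      have := Fintype.one_lt_card (α := F)
      rw [hdiv, add_comm _ δ, add_assoc, ← mul_add_one, Nat.sub_add_cancel this.le]
    rw [inv_pow, inv_pow, ← pow_mul, ← div_eq_mul_inv, ← div_eq_mul_inv,
      div_eq_div_iff (pow_ne_zero _ hx) (pow_ne_zero _ hx), ← pow_add, ← pow_add, hexp]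
  change _ * twist F (_ * ∏ j ∈ Finset.range N, nuFactor j ^ n)
    = _ * (_ * ∏ j ∈ Finset.range (N + 1), nuFactor j ^ n)
  have hC := congrArg PowerSeries.C hscal
  rw [map_mul, map_mul] at hC
  rw [twist_mul, twist_C, twist_prod_nuFactor_pow, Finset.prod_range_succ', tt_sub_th, mul_pow,
    ← map_pow]
  linear_combination (∏ j ∈ Finset.range N, nuFactor (j + 1) ^ n) * nuFactor 0 ^ n * hC

theorem tt_sub_th_pow_mul_twist_nu {n h δ : ℕ} (hdiv : n = h * (Fintype.card F - 1) + δ)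
    {ν : TS F} (hν : TT F (nuPartial F n h) ν) :
    (tt F - th F) ^ n * twist F ν = PowerSeries.C ((-theta F) ^ δ) * ν := by
  have hν' : TT F (fun N => nuPartial F n h (N + 1)) ν := hν.comp (tendsto_add_atTop_nat 1)
  have hlhs := hν.twist.mul_left (orderGE_tt_sub_th_pow n)
  have hrhs := hν'.mul_left (orderGE_C (coe_neg_le_orderTop_neg_theta_pow δ))
  simp only [tt_sub_th_pow_mul_twist_nuPartial hdiv] at hlhs
  exact hlhs.unique hrhs

theorem beta_mul_nu {n h δ : ℕ} (hdiv : n = h * (Fintype.card F - 1) + δ)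
    {ν : TS F} (hν : TT F (nuPartial F n h) ν) (f : TS F) :
    beta F n (f * ν) = (f - PowerSeries.C ((-theta F) ^ δ) * twist F f) * ν := by
  rw [beta, twist_mul]
  linear_combination (-twist F f) * tt_sub_th_pow_mul_twist_nu hdiv hν

section FrobeniusEquation

variable {c : Kinf F} {δ : ℕ}

theorem coe_le_orderTop_sub_mul_pow {x : Kinf F} {e M m : ℤ}
    (hc : (e : WithTop ℤ) ≤ c.orderTop) (hx : (M : WithTop ℤ) ≤ x.orderTop) (hM : m ≤ M)
    (hqM : m ≤ e + Fintype.card F * M) :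
    (m : WithTop ℤ) ≤ (x - c * x ^ Fintype.card F).orderTop :=
  HahnSeries.le_orderTop_sub ((WithTop.coe_le_coe.2 hM).trans hx)
    ((WithTop.coe_le_coe.2 hqM).trans
      (HahnSeries.coe_add_le_orderTop_mul hc (HahnSeries.coe_mul_le_orderTop_pow hx _)))

theorem coe_add_one_le_orderTop_add_mul_pow_sub (hc : ((-δ : ℤ) : WithTop ℤ) ≤ c.orderTop)
    (hδ : δ + 2 ≤ Fintype.card F) (a y z : Kinf F) (m : ℤ) (hm : 1 ≤ m)
    (hyz : (m : WithTop ℤ) ≤ (y - z).orderTop) :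
    ((m + 1 : ℤ) : WithTop ℤ) ≤
      ((a + c * y ^ Fintype.card F) - (a + c * z ^ Fintype.card F)).orderTop := by
  rw [show (a + c * y ^ Fintype.card F) - (a + c * z ^ Fintype.card F)
    = c * (y - z) ^ Fintype.card F by rw [sub_pow_card]; ring]
  refine (WithTop.coe_le_coe.2 ?_).trans
    (HahnSeries.coe_add_le_orderTop_mul hc (HahnSeries.coe_mul_le_orderTop_pow hyz _))
  have hq : (δ : ℤ) + 2 ≤ Fintype.card F := by exact_mod_cast hδ
  nlinarith

theorem exists_sub_mul_pow_eq (hc : ((-δ : ℤ) : WithTop ℤ) ≤ c.orderTop)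
    (hδ : δ + 2 ≤ Fintype.card F) {a : Kinf F} (ha : 1 ≤ a.orderTop) :
    ∃ x : Kinf F, a.orderTop ≤ x.orderTop ∧ x - c * x ^ Fintype.card F = a := by
  rcases eq_or_ne a 0 with rfl | ha0
  · exact ⟨0, le_rfl, by simp [zero_pow Fintype.card_ne_zero]⟩
  obtain ⟨e, he⟩ := WithTop.ne_top_iff_exists.1 (HahnSeries.orderTop_ne_top.2 ha0)
  rw [← he] at ha ⊢
  have he1 : 1 ≤ e := WithTop.coe_le_coe.1 ha
  obtain ⟨x, hx, hTx⟩ := HahnSeries.exists_isFixedPt_of_contracting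
    (T := fun y => a + c * y ^ Fintype.card F) (e := e)
    (by rw [zero_pow Fintype.card_ne_zero, mul_zero, add_zero, he])
    fun y z m hm => coe_add_one_le_orderTop_add_mul_pow_sub hc hδ a y z m (he1.trans hm)
  have hTx' : a + c * x ^ Fintype.card F = x := hTx
  exact ⟨x, hx, by linear_combination -hTx'⟩

theorem eq_of_sub_mul_pow_eq (hc : ((-δ : ℤ) : WithTop ℤ) ≤ c.orderTop)
    (hδ : δ + 2 ≤ Fintype.card F) {x y : Kinf F} (hx : 1 ≤ x.orderTop) (hy : 1 ≤ y.orderTop)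
    (h : x - c * x ^ Fintype.card F = y - c * y ^ Fintype.card F) : x = y :=
  HahnSeries.eq_of_isFixedPt_of_contracting
    (T := fun z => x - c * x ^ Fintype.card F + c * z ^ Fintype.card F)
    (e := 1) (coe_add_one_le_orderTop_add_mul_pow_sub hc hδ _) hx hy (sub_add_cancel _ _)
    (by simp only [Function.IsFixedPt, h, sub_add_cancel])

end FrobeniusEquation

section UnitBall

variable {c : Kinf F} {δ : ℕ} {g : TS F}

theorem coeffT_sub_C_mul_twist (i : ℕ) :
    coeffT F i (g - PowerSeries.C c * twist F g)
      = coeffT F i g - c * coeffT F i g ^ Fintype.card F := by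
  rw [coeffT_sub, coeffT_C_mul, coeffT_twist]

theorem IsTate.sub_C_mul_twist {e : ℤ} (hc : (e : WithTop ℤ) ≤ c.orderTop) (hg : IsTate F g) :
    IsTate F (g - PowerSeries.C c * twist F g) := by
  refine isTate_iff.2 fun m => (isTate_iff.1 hg (max (max m (m - e)) 0)).mono fun i hi => ?_
  rw [coeffT_sub_C_mul_twist]
  refine coe_le_orderTop_sub_mul_pow hc hi (by omega) ?_
  have hq : (1 : ℤ) ≤ Fintype.card F := by exact_mod_cast Fintype.card_pos
  nlinarith [le_max_right (max m (m - e)) 0, le_max_right m (m - e),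
    le_max_left (max m (m - e)) 0]

theorem orderGE_sub_C_mul_twist (hc : ((-δ : ℤ) : WithTop ℤ) ≤ c.orderTop)
    (hδ : δ + 2 ≤ Fintype.card F) (hg : OrderGE 1 g) :
    OrderGE 1 (g - PowerSeries.C c * twist F g) := fun i => by
  rw [coeffT_sub_C_mul_twist]
  exact coe_le_orderTop_sub_mul_pow hc (hg i) le_rfl (by omega)

theorem eq_of_sub_C_mul_twist_eq (hc : ((-δ : ℤ) : WithTop ℤ) ≤ c.orderTop)
    (hδ : δ + 2 ≤ Fintype.card F) {g' : TS F} (hg : OrderGE 1 g) (hg' : OrderGE 1 g')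
    (h : g - PowerSeries.C c * twist F g = g' - PowerSeries.C c * twist F g') : g = g' :=
  PowerSeries.ext fun i =>
    eq_of_sub_mul_pow_eq (x := coeffT F i g) (y := coeffT F i g') hc hδ (hg i) (hg' i) <| by
      simpa only [coeffT_sub_C_mul_twist] using congrArg (coeffT F i) h

theorem exists_sub_C_mul_twist_eq (hc : ((-δ : ℤ) : WithTop ℤ) ≤ c.orderTop)
    (hδ : δ + 2 ≤ Fintype.card F) (hgT : IsTate F g) (hg : OrderGE 1 g) :
    ∃ g' : TS F, IsTate F g' ∧ OrderGE 1 g' ∧ g' - PowerSeries.C c * twist F g' = g := by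
  choose x hx hxg using fun i => exists_sub_mul_pow_eq hc hδ (hg i)
  have hcoeff : ∀ i, coeffT F i (PowerSeries.mk x) = x i := fun i => PowerSeries.coeff_mk i x
  refine ⟨PowerSeries.mk x, isTate_iff.2 fun m => (isTate_iff.1 hgT m).mono fun i hi => ?_,
    fun i => ?_, PowerSeries.ext fun i => ?_⟩
  · rw [hcoeff]
    exact hi.trans (hx i)
  · rw [hcoeff]
    exact (hg i).trans (hx i)
  · change coeffT F i _ = coeffT F i g
    rw [coeffT_sub_C_mul_twist, hcoeff, hxg]

end UnitBall

variable (F) in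
theorem statement3 (q n h δ : ℕ) (hq : q = Fintype.card F)
    (hdiv : n = h * (q - 1) + δ) (hδ : δ < q - 1)
    (ν : TS F) (hνc : TT F (nuPartial F n h) ν) :
    -- the twisting formula
    (∀ f : TS F, IsTate F f →
      beta F n (f * ν)
        = (f - PowerSeries.C (R := Kinf F) ((-theta F) ^ δ) * twist F f) * ν) ∧
    -- `β` maps `𝔪_∞⟨t⟩·ν_n` into itself
    (∀ g : TS F, IsTate F g → gnorm F g < 1 →
      ∃ g' : TS F, IsTate F g' ∧ gnorm F g' < 1 ∧ beta F n (g * ν) = g' * ν) ∧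
    -- `β` is injective on `𝔪_∞⟨t⟩·ν_n`
    (∀ g g' : TS F, IsTate F g → gnorm F g < 1 → IsTate F g' → gnorm F g' < 1 →
      beta F n (g * ν) = beta F n (g' * ν) → g * ν = g' * ν) ∧
    -- `β` is surjective onto `𝔪_∞⟨t⟩·ν_n`
    (∀ g : TS F, IsTate F g → gnorm F g < 1 →
      ∃ g' : TS F, IsTate F g' ∧ gnorm F g' < 1 ∧ beta F n (g' * ν) = g * ν) := by
  subst hq
  have hc := coe_neg_le_orderTop_neg_theta_pow (F := F) δ
  have hδq : δ + 2 ≤ Fintype.card F := by omega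
  have hβ := beta_mul_nu hdiv hνc
  refine ⟨fun f _ => hβ f, fun g hg hg1 => ?_, fun g g' _ hg1 _ hg1' h => ?_, fun g hg hg1 => ?_⟩
  · exact ⟨_, hg.sub_C_mul_twist hc,
      gnorm_lt_one_iff.2 (orderGE_sub_C_mul_twist hc hδq (gnorm_lt_one_iff.1 hg1)), hβ g⟩
  · rcases eq_or_ne ν 0 with rfl | hν0
    · simp
    rw [hβ, hβ] at h
    rw [eq_of_sub_C_mul_twist_eq hc hδq (gnorm_lt_one_iff.1 hg1) (gnorm_lt_one_iff.1 hg1')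
      (mul_right_cancel₀ hν0 h)]
  · obtain ⟨g', hg'T, hg'1, hg'⟩ := exists_sub_C_mul_twist_eq hc hδq hg (gnorm_lt_one_iff.1 hg1)
    exact ⟨g', hg'T, gnorm_lt_one_iff.2 hg'1, by rw [hβ, hg']⟩

end Carlitz
end
end

section
/- Let n ≥ 0 be an integer. Then K_∞⟨t⟩ = (t−θ)^{−n}·𝔽[θ,t] + {g − (t−θ)^{−n} g^{(1)} : g ∈ K_∞⟨t⟩}; that is, every f ∈ K_∞⟨t⟩ can be written as f = (t−θ)^{−n} p + (g − (t−θ)^{−n} g^{(1)}) with p ∈ 𝔽[θ,t] and g ∈ K_∞⟨t⟩. (Equivalently: the class module Cl(A(n)) of the n-th Carlitz twist is trivial for n ≥ 0.) -/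
open scoped Classical ENNReal
open Filter

noncomputable section

/-!
With `u = (t - θ)ⁿ` the claim reads `u f = p + u g - g⁽¹⁾`. Since
`K∞⟨t⟩ = 𝔽[θ,t] + 𝔪∞⟨t⟩`, the polynomial `p` can be chosen so that `e = u f - p` has all
coefficients of absolute value `< 1`. Then `g = ∑_{k ≥ 0} e⁽ᵏ⁾ ∏_{i=0}^{k} (t - θ^{qⁱ})⁻ⁿ` works:
the twist of the `k`-th term is `u` times the `(k+1)`-st, so `u g - g⁽¹⁾` telescopes to `e`.
The series converges coefficientwise because the coefficients of `e⁽ᵏ⁾` have absolute value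
`≤ q^{-qᵏ}` while the `tʲ`-coefficient of each product has absolute value `≤ q^{-j}`; the latter
bound also makes the decay of the coefficients of `g` uniform, so `g` lies in `K∞⟨t⟩`.
-/

open Topology WithZero

instance {R Γ₀ : Type*} [Ring R] [LinearOrderedCommGroupWithZero Γ₀] [Valued R Γ₀] :
    NonarchimedeanAddGroup R where
  is_nonarchimedean U hU := by
    obtain ⟨γ, hγ⟩ := Valued.mem_nhds_zero.mp hU
    exact ⟨⟨Valued.v.restrict.ltAddSubgroup γ, Valued.isOpen_ball _ _⟩, hγ⟩

namespace Carlitz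

variable {F : Type} [Field F]

lemma valuation_theta : Valued.v (theta F) = exp 1 := by
  simpa [theta] using LaurentSeries.valuation_single_zpow F (-1)

lemma valuation_le_exp_iff_le_order {x : Kinf F} (hx : x ≠ 0) {m : ℤ} :
    Valued.v x ≤ exp (-m) ↔ m ≤ x.order :=
  (LaurentSeries.valuation_le_iff_coeff_lt_eq_zero F).trans (HahnSeries.le_order_iff_forall hx).symm

lemma isClosed_setOf_valuation_le (m : ℤ) : IsClosed {x : Kinf F | Valued.v x ≤ exp (-m)} := by
  convert Valued.isClosed_closedBall (Kinf F)
    (Valued.v.restrict (HahnSeries.single m (1 : F) : Kinf F)) using 3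
  rw [Valuation.restrict_le_iff, LaurentSeries.valuation_single_zpow]

lemma hasBasis_nhds_zero_valuation_le :
    (𝓝 (0 : Kinf F)).HasBasis (fun _ : ℤ => True) fun m => {x | Valued.v x ≤ exp (-m)} := by
  refine (Valued.hasBasis_nhds_zero (Kinf F) ℤᵐ⁰).to_hasBasis (fun γ _ => ?_) (fun m _ => ?_)
  · have hγ : MonoidWithZeroHom.ValueGroup₀.embedding γ.1 ≠ 0 := by simp
    refine ⟨1 - (MonoidWithZeroHom.ValueGroup₀.embedding γ.1).log, trivial, fun x hx => ?_⟩
    rw [Set.mem_ofPred_eq, Valuation.restrict_lt_iff_lt_embedding]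
    refine lt_of_le_of_lt hx ?_
    conv_rhs => rw [← exp_log hγ]
    rw [exp_lt_exp]
    omega
  · have hm : Valued.v.restrict (HahnSeries.single m (1 : F) : Kinf F) ≠ 0 := by simp
    refine ⟨Units.mk0 _ hm, trivial, fun x hx => ?_⟩
    rw [Set.mem_ofPred_eq, Units.val_mk0, Valuation.restrict_lt_iff,
      LaurentSeries.valuation_single_zpow] at hx
    exact hx.le

lemma tendsto_nhds_zero_iff {ι : Type*} {l : Filter ι} {s : ι → Kinf F} :
    Tendsto s l (𝓝 0) ↔ ∀ m : ℤ, ∀ᶠ k in l, Valued.v (s k) ≤ exp (-m) := by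
  simp [hasBasis_nhds_zero_valuation_le.tendsto_right_iff]

lemma valuation_le_of_hasSum {ι : Type*} {s : ι → Kinf F} {a : Kinf F} (hs : HasSum s a) {m : ℤ}
    (h : ∀ k, Valued.v (s k) ≤ exp (-m)) : Valued.v a ≤ exp (-m) :=
  (isClosed_setOf_valuation_le m).mem_of_tendsto hs
    (Eventually.of_forall fun _ => Valuation.map_sum_le _ fun k _ => h k)

lemma polyK_C_mul_X_pow (a : F) (k : ℕ) :
    polyK F (Polynomial.C a * Polynomial.X ^ k) = HahnSeries.single (-(k : ℤ)) a := by
  simp [polyK, theta, HahnSeries.single_pow, HahnSeries.C_apply, HahnSeries.single_mul_single]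

lemma exists_valuation_sub_polyK_le (x : Kinf F) :
    ∃ P : Polynomial F, Valued.v (x - polyK F P) ≤ exp (-1) := by
  simp only [LaurentSeries.valuation_le_iff_coeff_lt_eq_zero]
  suffices key : ∀ N : ℕ, ∀ x : Kinf F, (∀ d : ℤ, d < 1 - N → x.coeff d = 0) →
      ∃ P, ∀ d : ℤ, d < 1 → (x - polyK F P).coeff d = 0 from
    key (1 - x.order).toNat x fun d hd => HahnSeries.coeff_eq_zero_of_lt_order (by omega)
  intro N
  induction N with
  | zero => exact fun x hx => ⟨0, by simpa using hx⟩
  | succ N ih =>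
    intro x hx
    set a := x.coeff (-N)
    obtain ⟨P, hP⟩ := ih (x - HahnSeries.single (-(N : ℤ)) a) fun d hd => by
      rw [HahnSeries.coeff_sub, HahnSeries.coeff_single]
      split_ifs with h
      · rw [h, sub_self]
      · rw [hx d (by omega), sub_zero]
    refine ⟨P + Polynomial.C a * Polynomial.X ^ N, fun d hd => ?_⟩
    rw [map_add, polyK_C_mul_X_pow, sub_add_eq_sub_sub_swap]
    exact hP d hd

lemma coeff_polyT (P : Polynomial (Polynomial F)) (i : ℕ) :
    PowerSeries.coeff i (polyT F P) = polyK F (P.coeff i) := by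
  rw [polyT, Polynomial.coe_eval₂RingHom, ← Polynomial.eval₂_map, Polynomial.eval₂_C_X_eq_coe,
    Polynomial.coeff_coe, Polynomial.coeff_map]

lemma valuation_coeff_mul_le {φ ψ : TS F} {i : ℕ} {γ : ℤᵐ⁰}
    (h : ∀ a b, a + b = i →
      Valued.v (PowerSeries.coeff a φ) * Valued.v (PowerSeries.coeff b ψ) ≤ γ) :
    Valued.v (PowerSeries.coeff i (φ * ψ)) ≤ γ := by
  rw [PowerSeries.coeff_mul]
  exact Valuation.map_sum_le _ fun ab hab =>
    (map_mul _ _ _).trans_le (h _ _ (Finset.HasAntidiagonal.mem_antidiagonal.mp hab))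

variable (F) in
/-- Power series in `t/θ` with coefficients in `𝒪∞`. -/
def integralInTOverTheta : Subring (TS F) where
  carrier := {φ | ∀ j : ℕ, Valued.v (PowerSeries.coeff j φ) ≤ exp (-(j : ℤ))}
  mul_mem' {φ ψ} hφ hψ j := valuation_coeff_mul_le fun a b hab =>
    calc _ ≤ exp (-(a : ℤ)) * exp (-(b : ℤ)) := mul_le_mul' (hφ a) (hψ b)
      _ = exp (-(j : ℤ)) := by rw [← exp_add]; congr 1; omega
  one_mem' j := by
    rw [PowerSeries.coeff_one]
    split_ifs with h <;> simp [h]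
  add_mem' hφ hψ j := by
    rw [map_add]
    exact Valuation.map_add_le _ (hφ j) (hψ j)
  zero_mem' j := by simp
  neg_mem' hφ j := by
    rw [map_neg, Valuation.map_neg]
    exact hφ j

lemma inv_X_sub_C_mem_integralInTOverTheta {c : Kinf F} (hc : exp 1 ≤ Valued.v c) :
    (tt F - PowerSeries.C c)⁻¹ ∈ integralInTOverTheta F := by
  have hc0 : c ≠ 0 := by
    rintro rfl
    simp at hc
  have hinv : (tt F - PowerSeries.C c)⁻¹ = -PowerSeries.invUnitsSub (Units.mk0 c hc0) := by
    rw [PowerSeries.inv_eq_iff_mul_eq_one (by simp [tt, hc0]), neg_mul, ← mul_neg, neg_sub]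
    exact PowerSeries.invUnitsSub_mul_sub _
  intro j
  rw [hinv, map_neg, PowerSeries.coeff_invUnitsSub, Valuation.map_neg]
  simp only [one_divp, Units.val_inv_eq_inv_val, Units.val_pow_eq_pow_val, Units.val_mk0, map_inv₀,
    map_pow, exp_neg]
  refine inv_anti₀ exp_pos ?_
  calc exp (j : ℤ) ≤ exp 1 ^ (j + 1) := by rw [← exp_nsmul, exp_le_exp]; simp
    _ ≤ Valued.v c ^ (j + 1) := pow_le_pow_left₀ zero_le hc _

lemma X_sub_theta_mul_inv : (tt F - th F) * (tt F - th F)⁻¹ = 1 :=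
  PowerSeries.mul_inv_cancel _ (by simp [tt, th, theta])

lemma valuation_coeff_le_one {φ : TS F} (hφ : φ ∈ integralInTOverTheta F) (j : ℕ) :
    Valued.v (PowerSeries.coeff j φ) ≤ 1 :=
  (hφ j).trans (by rw [← exp_zero, exp_le_exp]; omega)

lemma powerSeries_map_inv {k l : Type*} [Field k] [Field l] (f : k →+* l) (φ : PowerSeries k) :
    PowerSeries.map f φ⁻¹ = (PowerSeries.map f φ)⁻¹ := by
  have hc : PowerSeries.constantCoeff (PowerSeries.map f φ) = f (PowerSeries.constantCoeff φ) := by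
    simp only [← PowerSeries.coeff_zero_eq_constantCoeff_apply, PowerSeries.coeff_map]
  by_cases h : PowerSeries.constantCoeff φ = 0
  · rw [PowerSeries.inv_eq_zero.mpr h, map_zero, eq_comm, PowerSeries.inv_eq_zero, hc, h, map_zero]
  · rw [eq_comm, PowerSeries.inv_eq_iff_mul_eq_one (by simpa [hc] using h), ← map_mul,
      PowerSeries.inv_mul_cancel _ h, map_one]

lemma hasSum_coeff_mul_left {ι : Type*} (φ : TS F) {s : ι → TS F} {g : TS F}
    (h : ∀ i, HasSum (fun k => PowerSeries.coeff i (s k)) (PowerSeries.coeff i g)) (i : ℕ) :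
    HasSum (fun k => PowerSeries.coeff i (φ * s k)) (PowerSeries.coeff i (φ * g)) := by
  simp only [PowerSeries.coeff_mul]
  exact hasSum_sum fun ab _ => (h ab.2).mul_left _

variable [Fintype F]

lemma kabs_le_zpow_iff {x : Kinf F} {m : ℤ} :
    Kabs (Fintype.card F) x ≤ (Fintype.card F : ℝ≥0∞) ^ (-m) ↔ Valued.v x ≤ exp (-m) := by
  rcases eq_or_ne x 0 with rfl | hx
  · simp [Kabs]
  have hq : (1 : NNReal) < Fintype.card F := by exact_mod_cast Fintype.one_lt_card
  rw [Kabs, if_neg hx, valuation_le_exp_iff_le_order hx, ← ENNReal.coe_natCast,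
    ← ENNReal.coe_zpow (by positivity), ← ENNReal.coe_zpow (by positivity), ENNReal.coe_le_coe,
    zpow_le_zpow_iff_right₀ hq, neg_le_neg_iff]

lemma isTate_iff_tendsto {f : TS F} :
    IsTate F f ↔ Tendsto (fun i => PowerSeries.coeff i f) atTop (𝓝 0) := by
  rw [tendsto_nhds_zero_iff, IsTate, ENNReal.tendsto_nhds_zero]
  simp only [← kabs_le_zpow_iff]
  constructor
  · intro h m
    exact h _ (ENNReal.zpow_pos (by simp) (by simp) _)
  · intro h ε hε
    obtain ⟨m, hm⟩ := ENNReal.exists_inv_two_pow_lt hε.ne'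
    have h2q : (2 : ℝ≥0∞) ≤ Fintype.card F := by exact_mod_cast Fintype.one_lt_card
    have hqm : (Fintype.card F : ℝ≥0∞) ^ (-(m : ℤ)) ≤ 2⁻¹ ^ m := by
      rw [ENNReal.zpow_neg, zpow_natCast, ← ENNReal.inv_pow]
      exact ENNReal.inv_le_inv.mpr (pow_le_pow_left₀ zero_le h2q m)
    exact (h m).mono fun i hi => hi.trans (hqm.trans hm.le)

lemma IsTate.sub {f g : TS F} (hf : IsTate F f) (hg : IsTate F g) : IsTate F (f - g) := by
  rw [isTate_iff_tendsto] at *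
  simpa using hf.sub hg

lemma IsTate.C_mul {f : TS F} (hf : IsTate F f) (c : Kinf F) :
    IsTate F (PowerSeries.C c * f) := by
  rw [isTate_iff_tendsto] at *
  simpa using hf.const_mul c

lemma IsTate.X_mul {f : TS F} (hf : IsTate F f) : IsTate F (tt F * f) := by
  rw [isTate_iff_tendsto] at *
  rw [← tendsto_add_atTop_iff_nat 1]
  simpa [tt] using hf

lemma IsTate.X_sub_C_pow_mul {f : TS F} (hf : IsTate F f) (c : Kinf F) (n : ℕ) :
    IsTate F ((tt F - PowerSeries.C c) ^ n * f) := by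
  induction n with
  | zero => simpa using hf
  | succ n ih =>
    rw [pow_succ', mul_assoc, sub_mul]
    exact ih.X_mul.sub (ih.C_mul c)

lemma IsTate.exists_sub_polyTT {f : TS F} (hf : IsTate F f) :
    ∃ p ∈ PolyTT F, IsTate F (f - p) ∧
      ∀ i, Valued.v (PowerSeries.coeff i (f - p)) ≤ exp (-1) := by
  rw [isTate_iff_tendsto] at hf
  obtain ⟨N, hN⟩ := eventually_atTop.mp (tendsto_nhds_zero_iff.mp hf 1)
  choose P hP using fun i => exists_valuation_sub_polyK_le (PowerSeries.coeff i f)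
  set Q : Polynomial (Polynomial F) := ∑ i ∈ Finset.range N, Polynomial.monomial i (P i)
  have hQ : ∀ i, PowerSeries.coeff i (f - polyT F Q) =
      if i < N then PowerSeries.coeff i f - polyK F (P i) else PowerSeries.coeff i f := by
    intro i
    have hQi : Q.coeff i = if i < N then P i else 0 := by
      simp [Q, Polynomial.finsetSum_coeff, Polynomial.coeff_monomial]
    rw [map_sub, coeff_polyT, hQi]
    split_ifs <;> simp
  refine ⟨polyT F Q, ⟨Q, rfl⟩, ?_, fun i => ?_⟩
  · rw [isTate_iff_tendsto]
    refine hf.congr' ?_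
    filter_upwards [eventually_ge_atTop N] with i hi
    rw [hQ, if_neg (by omega)]
  · rw [hQ]
    split_ifs with hi
    exacts [hP i, hN i (by omega)]

variable (F) in
def twistHom : TS F →+* TS F :=
  PowerSeries.map (FiniteField.frobeniusAlgHom F (Kinf F) : Kinf F →+* Kinf F)

lemma twistHom_apply (f : TS F) : twistHom F f = twist F f := by
  ext i
  simp [twistHom, twist, coeffT]

lemma coeff_twist (i : ℕ) (f : TS F) :
    PowerSeries.coeff i (twist F f) = PowerSeries.coeff i f ^ Fintype.card F :=
  PowerSeries.coeff_mk _ _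

@[simp]
lemma twistIter_zero (f : TS F) : twistIter F 0 f = f := rfl

lemma twistIter_succ (k : ℕ) (f : TS F) : twistIter F (k + 1) f = twist F (twistIter F k f) :=
  Function.iterate_succ_apply' _ _ _

lemma coeff_twistIter (i k : ℕ) (f : TS F) :
    PowerSeries.coeff i (twistIter F k f) = PowerSeries.coeff i f ^ Fintype.card F ^ k := by
  induction k with
  | zero => simp
  | succ k ih => rw [twistIter_succ, coeff_twist, ih, ← pow_mul, pow_succ]

lemma twist_X_sub_C (c : Kinf F) :
    twist F (tt F - PowerSeries.C c) = tt F - PowerSeries.C (c ^ Fintype.card F) := by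
  simp [← twistHom_apply, twistHom, tt]

lemma twist_inv (f : TS F) : twist F f⁻¹ = (twist F f)⁻¹ := by
  simp only [← twistHom_apply, twistHom, powerSeries_map_inv]

variable (F) in
def invProd (n k : ℕ) : TS F :=
  ∏ i ∈ Finset.range (k + 1), (tt F - PowerSeries.C (theta F ^ Fintype.card F ^ i))⁻¹ ^ n

lemma invProd_mem_integralInTOverTheta (n k : ℕ) : invProd F n k ∈ integralInTOverTheta F := by
  refine prod_mem fun i _ => pow_mem (inv_X_sub_C_mem_integralInTOverTheta ?_) n
  rw [map_pow, valuation_theta, ← exp_nsmul, exp_le_exp, nsmul_one]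
  exact_mod_cast Nat.one_le_pow _ _ Fintype.card_pos

lemma mul_invProd_zero (n : ℕ) : (tt F - th F) ^ n * invProd F n 0 = 1 := by
  rw [invProd, Finset.prod_range_one, pow_zero, pow_one, ← th, ← mul_pow, X_sub_theta_mul_inv,
    one_pow]

lemma twist_invProd (n k : ℕ) :
    twist F (invProd F n k) = (tt F - th F) ^ n * invProd F n (k + 1) := by
  have hsucc : invProd F n (k + 1) = (tt F - th F)⁻¹ ^ n *
      ∏ i ∈ Finset.range (k + 1),
        (tt F - PowerSeries.C (theta F ^ Fintype.card F ^ (i + 1)))⁻¹ ^ n := by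
    rw [invProd, Finset.prod_range_succ', pow_zero, pow_one, ← th, mul_comm]
  rw [hsucc, ← mul_assoc, ← mul_pow, X_sub_theta_mul_inv, one_pow, one_mul, invProd,
    ← twistHom_apply, map_prod]
  refine Finset.prod_congr rfl fun i _ => ?_
  rw [map_pow, twistHom_apply, twist_inv, twist_X_sub_C, ← pow_mul, ← pow_succ]

variable (F) in
def xi (n : ℕ) (e : TS F) : TS F :=
  PowerSeries.mk fun i => ∑' k, PowerSeries.coeff i (twistIter F k e * invProd F n k)

section xi

variable {e : TS F} (n : ℕ)

lemma valuation_coeff_twistIter_mul_invProd_le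
    (he : ∀ j, Valued.v (PowerSeries.coeff j e) ≤ exp (-1)) (i k : ℕ) :
    Valued.v (PowerSeries.coeff i (twistIter F k e * invProd F n k)) ≤
      exp (-((Fintype.card F ^ k : ℕ) : ℤ)) := by
  refine valuation_coeff_mul_le fun a b _ => ?_
  rw [coeff_twistIter, map_pow]
  calc _ ≤ exp (-1) ^ (Fintype.card F ^ k) * 1 :=
        mul_le_mul' (pow_le_pow_left₀ zero_le (he a) _)
          (valuation_coeff_le_one (invProd_mem_integralInTOverTheta n k) b)
    _ = _ := by rw [mul_one, ← exp_nsmul, smul_neg, nsmul_one]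

lemma tendsto_coeff_twistIter_mul_invProd
    (he : ∀ j, Valued.v (PowerSeries.coeff j e) ≤ exp (-1)) (i : ℕ) :
    Tendsto (fun k => PowerSeries.coeff i (twistIter F k e * invProd F n k)) atTop (𝓝 0) := by
  rw [tendsto_nhds_zero_iff]
  intro m
  have hq : Tendsto (fun k => Fintype.card F ^ k) atTop atTop :=
    tendsto_pow_atTop_atTop_of_one_lt Fintype.one_lt_card
  filter_upwards [hq.eventually_ge_atTop m.toNat] with k hk
  refine (valuation_coeff_twistIter_mul_invProd_le n he i k).trans ?_
  rw [exp_le_exp]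
  omega

lemma hasSum_coeff_xi (he : ∀ j, Valued.v (PowerSeries.coeff j e) ≤ exp (-1)) (i : ℕ) :
    HasSum (fun k => PowerSeries.coeff i (twistIter F k e * invProd F n k))
      (PowerSeries.coeff i (xi F n e)) := by
  rw [xi, PowerSeries.coeff_mk]
  refine (NonarchimedeanAddGroup.summable_of_tendsto_cofinite_zero ?_).hasSum
  rw [Nat.cofinite_eq_atTop]
  exact tendsto_coeff_twistIter_mul_invProd n he i

lemma isTate_xi (he : ∀ j, Valued.v (PowerSeries.coeff j e) ≤ exp (-1)) (he' : IsTate F e) :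
    IsTate F (xi F n e) := by
  rw [isTate_iff_tendsto, tendsto_nhds_zero_iff] at *
  intro m
  obtain ⟨A, hA⟩ := eventually_atTop.mp (he' (max m 0))
  refine eventually_atTop.mpr ⟨A + (max m 0).toNat, fun i hi =>
    valuation_le_of_hasSum (hasSum_coeff_xi n he i) fun k =>
      valuation_coeff_mul_le fun a b hab => ?_⟩
  have hpow : Valued.v (PowerSeries.coeff a (twistIter F k e)) ≤
      Valued.v (PowerSeries.coeff a e) := by
    rw [coeff_twistIter, map_pow]
    exact pow_le_of_le_one zero_le ((he a).trans (by rw [← exp_zero, exp_le_exp]; omega))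
      (pow_ne_zero _ Fintype.card_ne_zero)
  have hW := invProd_mem_integralInTOverTheta (F := F) n k
  rcases le_or_gt A a with ha | ha
  · calc _ ≤ exp (-max m 0) * 1 :=
          mul_le_mul' (hpow.trans (hA a ha)) (valuation_coeff_le_one hW b)
      _ ≤ exp (-m) := by rw [mul_one, exp_le_exp]; omega
  · calc _ ≤ exp (-1) * exp (-(b : ℤ)) := mul_le_mul' (hpow.trans (he a)) (hW b)
      _ ≤ exp (-m) := by rw [← exp_add, exp_le_exp]; omega

lemma mul_sub_twist_xi (he : ∀ j, Valued.v (PowerSeries.coeff j e) ≤ exp (-1)) :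
    (tt F - th F) ^ n * xi F n e - twist F (xi F n e) = e := by
  set u := (tt F - th F) ^ n
  set T := fun k => twistIter F k e * invProd F n k
  have hT : ∀ k, twist F (T k) = u * T (k + 1) := by
    intro k
    simp only [T, twistIter_succ]
    rw [← twistHom_apply, map_mul, twistHom_apply, twistHom_apply, twist_invProd]
    ring
  refine PowerSeries.ext fun i => ?_
  have hu := hasSum_coeff_mul_left u (hasSum_coeff_xi n he) i
  have htw : HasSum (fun k => PowerSeries.coeff i (u * T (k + 1)))
      (PowerSeries.coeff i (twist F (xi F n e))) := by
    simp only [← hT, coeff_twist]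
    exact (hasSum_coeff_xi n he i).map (FiniteField.frobeniusAlgHom F (Kinf F))
      (by simpa [FiniteField.coe_frobeniusAlgHom] using continuous_pow _)
  have h0 : PowerSeries.coeff i (u * (e * invProd F n 0)) = PowerSeries.coeff i e := by
    rw [mul_left_comm, mul_invProd_zero, mul_one]
  have hshift : HasSum (fun k => PowerSeries.coeff i (u * T (k + 1)))
      (PowerSeries.coeff i (u * xi F n e) - PowerSeries.coeff i e) := by
    simpa [h0] using (hasSum_nat_add_iff' 1).mpr hu
  rw [map_sub, htw.unique hshift, sub_sub_cancel]

end xi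

variable (F) in
theorem statement7 (n : ℕ) :
    ∀ f : TS F, IsTate F f →
      ∃ p ∈ PolyTT F, ∃ g : TS F, IsTate F g ∧
        f = ((tt F - th F) ^ n)⁻¹ * p + (g - ((tt F - th F) ^ n)⁻¹ * twist F g) := by
  intro f hf
  have huf : IsTate F ((tt F - th F) ^ n * f) := hf.X_sub_C_pow_mul (theta F) n
  obtain ⟨p, hp, he, he1⟩ := huf.exists_sub_polyTT
  refine ⟨p, hp, xi F n _, isTate_xi n he1 he, ?_⟩
  have hxi := mul_sub_twist_xi n he1
  have hu : ((tt F - th F) ^ n)⁻¹ * (tt F - th F) ^ n = 1 :=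
    PowerSeries.inv_mul_cancel _ (by simp [tt, th, theta])
  linear_combination (xi F n _ - f) * hu - ((tt F - th F) ^ n)⁻¹ * hxi

end Carlitz
end
end
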